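/- Let n, d be natural numbers, let Φ be a real n×d matrix, let c > 0 be a real number, let v ∈ ℝ^d, and let ε ∈ ℝ^n. Then |(Φ v)ᵀ (Φ Φᵀ + c I)⁻¹ ε| ≤ (1/√c) · √(vᵀ v − (Φ v)ᵀ (Φ Φᵀ + c I)⁻¹ Φ v) · √(εᵀ Φ Φᵀ (Φ Φᵀ + c I)⁻¹ ε). -/

import Mathlib

/-!
With `A = Φ Φᵀ + c I` and `B = Φᵀ Φ + c I`, the push-through identity `Φᵀ A⁻¹ = B⁻¹ Φᵀ` moves
everything to `ℝ^d`: the left side becomes `vᵀ B⁻¹ (Φᵀ ε)`, the power-function term becomes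
`c · vᵀ B⁻¹ v` (because `Φᵀ A⁻¹ Φ = I - c B⁻¹`), and the noise term becomes
`(Φᵀ ε)ᵀ B⁻¹ (Φᵀ ε)`. The bound is then Cauchy–Schwarz for the positive definite form `B⁻¹`.
-/

open Matrix

namespace Matrix

section PushThrough

variable {m n R : Type*} [Fintype m] [Fintype n] [DecidableEq m] [DecidableEq n] [CommRing R]

theorem mul_inv_mul_add_smul_one (X : Matrix m n R) (Y : Matrix n m R) (c : R)
    (hYX : IsUnit (Y * X + c • 1)) (hXY : IsUnit (X * Y + c • 1)) :
    X * (Y * X + c • 1)⁻¹ = (X * Y + c • 1)⁻¹ * X := by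
  have hYX' := (isUnit_iff_isUnit_det _).mp hYX
  have hXY' := (isUnit_iff_isUnit_det _).mp hXY
  have intertwine : X * (Y * X + c • 1) = (X * Y + c • 1) * X := by
    simp only [Matrix.mul_add, Matrix.add_mul, Matrix.mul_smul, Matrix.smul_mul,
      Matrix.mul_one, Matrix.one_mul, Matrix.mul_assoc]
  calc X * (Y * X + c • 1)⁻¹
      = (X * Y + c • 1)⁻¹ * ((X * Y + c • 1) * X) * (Y * X + c • 1)⁻¹ := by
        rw [nonsing_inv_mul_cancel_left _ _ hXY']
    _ = (X * Y + c • 1)⁻¹ * X := by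
        rw [← intertwine, ← Matrix.mul_assoc, mul_nonsing_inv_cancel_right _ _ hYX']

theorem mul_inv_mul_add_smul_one_mul (X : Matrix m n R) (Y : Matrix n m R) (c : R)
    (hYX : IsUnit (Y * X + c • 1)) (hXY : IsUnit (X * Y + c • 1)) :
    X * (Y * X + c • 1)⁻¹ * Y = 1 - c • (X * Y + c • 1)⁻¹ := by
  have hXY' := (isUnit_iff_isUnit_det _).mp hXY
  calc X * (Y * X + c • 1)⁻¹ * Y
      = (X * Y + c • 1)⁻¹ * ((X * Y + c • 1) - c • 1) := by
        rw [mul_inv_mul_add_smul_one X Y c hYX hXY, add_sub_cancel_right, Matrix.mul_assoc]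
    _ = 1 - c • (X * Y + c • 1)⁻¹ := by
        rw [Matrix.mul_sub, nonsing_inv_mul _ hXY', Matrix.mul_smul, Matrix.mul_one]

end PushThrough

variable {m n : Type*} [Fintype m] [Fintype n]

theorem PosSemidef.dotProduct_mulVec_sq_le {S : Matrix m m ℝ} (hS : S.PosSemidef) (x y : m → ℝ) :
    (x ⬝ᵥ (S *ᵥ y)) ^ 2 ≤ (x ⬝ᵥ (S *ᵥ x)) * (y ⬝ᵥ (S *ᵥ y)) := by
  let _ := S.toSeminormedAddCommGroup hS
  let _ := S.toInnerProductSpace hS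
  have hinner : ∀ a b : m → ℝ, inner ℝ a b = a ⬝ᵥ (S *ᵥ b) := fun a b => dotProduct_comm _ _
  simpa only [hinner, sq] using real_inner_mul_inner_self_le x y

theorem PosSemidef.abs_dotProduct_mulVec_le {S : Matrix m m ℝ} (hS : S.PosSemidef) (x y : m → ℝ) :
    |x ⬝ᵥ (S *ᵥ y)| ≤ √(x ⬝ᵥ (S *ᵥ x)) * √(y ⬝ᵥ (S *ᵥ y)) := by
  rw [← Real.sqrt_mul (by simpa using hS.dotProduct_mulVec_nonneg x), ← Real.sqrt_sq_eq_abs]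
  exact Real.sqrt_le_sqrt (hS.dotProduct_mulVec_sq_le x y)

theorem posDef_mul_transpose_add_smul_one [DecidableEq m] (Φ : Matrix m n ℝ) {c : ℝ} (hc : 0 < c) :
    (Φ * Φᵀ + c • 1).PosDef := by
  simpa using PosDef.posSemidef_add (posSemidef_self_mul_conjTranspose Φ) (PosDef.one.smul hc)

end Matrix

theorem lemma3_noise_bound (n d : ℕ) (Φ : Matrix (Fin n) (Fin d) ℝ) (c : ℝ)
    (hc : 0 < c) (v : Fin d → ℝ) (ε : Fin n → ℝ) :
    |(Φ *ᵥ v) ⬝ᵥ ((Φ * Φᵀ + c • (1 : Matrix (Fin n) (Fin n) ℝ))⁻¹ *ᵥ ε)| ≤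
      (1 / Real.sqrt c) *
        Real.sqrt (v ⬝ᵥ v -
          (Φ *ᵥ v) ⬝ᵥ ((Φ * Φᵀ + c • (1 : Matrix (Fin n) (Fin n) ℝ))⁻¹ *ᵥ (Φ *ᵥ v))) *
        Real.sqrt (ε ⬝ᵥ ((Φ * Φᵀ * (Φ * Φᵀ + c • (1 : Matrix (Fin n) (Fin n) ℝ))⁻¹) *ᵥ ε)) := by
  set A := Φ * Φᵀ + c • (1 : Matrix (Fin n) (Fin n) ℝ)
  set B := Φᵀ * Φ + c • (1 : Matrix (Fin d) (Fin d) ℝ)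
  have hA : A.PosDef := posDef_mul_transpose_add_smul_one Φ hc
  have hB : B.PosDef := by simpa using posDef_mul_transpose_add_smul_one Φᵀ hc
  have hpush : Φᵀ * A⁻¹ = B⁻¹ * Φᵀ := mul_inv_mul_add_smul_one Φᵀ Φ c hA.isUnit hB.isUnit
  set u := Φᵀ *ᵥ ε
  have hcross : (Φ *ᵥ v) ⬝ᵥ (A⁻¹ *ᵥ ε) = v ⬝ᵥ (B⁻¹ *ᵥ u) := by
    rw [dotProduct_comm, ← dotProduct_transpose_mulVec Φ, mulVec_mulVec, hpush, ← mulVec_mulVec]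
  have hpower : v ⬝ᵥ v - (Φ *ᵥ v) ⬝ᵥ (A⁻¹ *ᵥ (Φ *ᵥ v)) = c * (v ⬝ᵥ (B⁻¹ *ᵥ v)) := by
    rw [dotProduct_comm (Φ *ᵥ v), ← dotProduct_transpose_mulVec Φ, mulVec_mulVec, mulVec_mulVec,
      mul_inv_mul_add_smul_one_mul Φᵀ Φ c hA.isUnit hB.isUnit, sub_mulVec, one_mulVec,
      dotProduct_sub, smul_mulVec, dotProduct_smul, smul_eq_mul, sub_sub_cancel]
  have hnoise : ε ⬝ᵥ ((Φ * Φᵀ * A⁻¹) *ᵥ ε) = u ⬝ᵥ (B⁻¹ *ᵥ u) := by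
    rw [Matrix.mul_assoc, hpush, ← mulVec_mulVec, ← mulVec_mulVec, ← dotProduct_transpose_mulVec,
      dotProduct_comm]
  calc |(Φ *ᵥ v) ⬝ᵥ (A⁻¹ *ᵥ ε)|
      = |v ⬝ᵥ (B⁻¹ *ᵥ u)| := by rw [hcross]
    _ ≤ √(v ⬝ᵥ (B⁻¹ *ᵥ v)) * √(u ⬝ᵥ (B⁻¹ *ᵥ u)) :=
        hB.posSemidef.inv.abs_dotProduct_mulVec_le v u
    _ = 1 / √c * √(c * (v ⬝ᵥ (B⁻¹ *ᵥ v))) * √(u ⬝ᵥ (B⁻¹ *ᵥ u)) := by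
        rw [Real.sqrt_mul hc.le]
        field_simp
    _ = _ := by rw [hpower, hnoise]
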